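/- arXiv:2303.08604 — 2 statements merged into one kernel-verified Lean document; each statement's English description precedes it below -/
import Mathlib

section
/- For every grid point z_j ∈ Z_θ and every t = 0,…,T−2, one has ω̄_t(z_j) ≤ U^ω_t(z_j) ≤ Ū^ω_t(θ). -/
open MeasureTheory Filter Set


open MeasureTheory Filter Set

noncomputable def Gk (α θ : ℝ) (γ : ℕ → ℝ) (F : ℕ → ℝ → ℝ) (s : ℕ → ℝ) (k t : ℕ) (y : ℝ) : ℝ :=
  ∑ n ∈ Finset.Icc 1 k, α ^ n * γ (t + n) *
    ∏ m ∈ Finset.range n, F (t + m) (y + ((m : ℝ) + 1) * θ - s (t + m + 1))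

noncomputable def VW (α θ : ℝ) (γ : ℕ → ℝ) (F : ℕ → ℝ → ℝ) (s SU : ℕ → ℝ) :
    ℕ → (ℕ → ℝ → ℝ) × (ℕ → ℝ → ℝ)
  | 0 => (fun _ _ => 0, fun _ _ => 0)
  | (k+1) =>
    (fun t x => θ * Gk α θ γ F s (k+1) t x + α * (VW α θ γ F s SU k).2 (t+1) (x + θ),
     fun t u => θ * γ t + θ * Gk α θ γ F s (k+1) t (SU t)
        + (θ * Gk α θ γ F s (k+1) t (max u (SU t))
           + α * (VW α θ γ F s SU k).2 (t+1) (max u (SU t) + θ)))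

lemma Gk_zero (α θ : ℝ) (γ : ℕ → ℝ) (F : ℕ → ℝ → ℝ) (s : ℕ → ℝ) (t : ℕ) (y : ℝ) :
    Gk α θ γ F s 0 t y = 0 := by
  simp [Gk]

lemma Gk_nonneg {α θ : ℝ} {γ : ℕ → ℝ} {F : ℕ → ℝ → ℝ} {s : ℕ → ℝ} {k t : ℕ} {y : ℝ}
    (hα0 : 0 ≤ α) (hF0 : ∀ i x, 0 ≤ F i x) (hγ : ∀ n, n ≤ k → 0 ≤ γ (t + n)) :
    0 ≤ Gk α θ γ F s k t y := by
  apply Finset.sum_nonneg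
  intro n hn
  have hn' := (Finset.mem_Icc.1 hn).2
  exact mul_nonneg (mul_nonneg (pow_nonneg hα0 n) (hγ n hn'))
    (Finset.prod_nonneg fun m _ => hF0 _ _)

lemma Gk_mono {α θ : ℝ} {γ : ℕ → ℝ} {F : ℕ → ℝ → ℝ} {s : ℕ → ℝ} {k t : ℕ} {y y' : ℝ}
    (hα0 : 0 ≤ α) (hF0 : ∀ i x, 0 ≤ F i x) (hFm : ∀ i x y, x ≤ y → F i x ≤ F i y)
    (hγ : ∀ n, n ≤ k → 0 ≤ γ (t + n)) (hyy : y ≤ y') :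
    Gk α θ γ F s k t y ≤ Gk α θ γ F s k t y' := by
  apply Finset.sum_le_sum
  intro n hn
  have hn' := (Finset.mem_Icc.1 hn).2
  apply mul_le_mul_of_nonneg_left _ (mul_nonneg (pow_nonneg hα0 n) (hγ n hn'))
  apply Finset.prod_le_prod (fun m _ => hF0 _ _)
  intro m _
  exact hFm _ _ _ (by linarith)

lemma Gk_succ (α θ : ℝ) (γ : ℕ → ℝ) (F : ℕ → ℝ → ℝ) (s : ℕ → ℝ) (k t : ℕ) (y : ℝ) :
    Gk α θ γ F s (k+1) t y
      = α * F t (y + θ - s (t+1)) * (γ (t+1) + Gk α θ γ F s k (t+1) (y + θ)) := by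
  have hL : Gk α θ γ F s (k+1) t y = ∑ n ∈ Finset.Icc 1 (k+1), α ^ n * γ (t + n) *
      ∏ m ∈ Finset.range n, F (t + m) (y + ((m : ℝ) + 1) * θ - s (t + m + 1)) := rfl
  rw [hL, ← Finset.Ico_add_one_right_eq_Icc, Finset.sum_Ico_eq_sum_range]
  have hr : k + 1 + 1 - 1 = k + 1 := by omega
  rw [hr]
  have hterm : ∀ i, α ^ (1+i) * γ (t + (1+i)) *
      ∏ m ∈ Finset.range (1+i), F (t + m) (y + ((m:ℝ)+1)*θ - s (t+m+1))
      = α * F t (y + θ - s (t+1)) *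
        (α ^ i * γ (t+1+i) *
          ∏ m ∈ Finset.range i, F (t+1+m) ((y+θ) + ((m:ℝ)+1)*θ - s (t+1+m+1))) := by
    intro i
    have hp : ∏ m ∈ Finset.range (1+i), F (t+m) (y + ((m:ℝ)+1)*θ - s (t+m+1))
        = (∏ m ∈ Finset.range i, F (t+1+m) ((y+θ) + ((m:ℝ)+1)*θ - s (t+1+m+1)))
            * F t (y + θ - s (t+1)) := by
      rw [show 1 + i = i + 1 from by omega, Finset.prod_range_succ']
      congr 1
      · apply Finset.prod_congr rfl
        intro m _
        rw [show t + (m+1) = t+1+m from by omega]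
        congr 1
        push_cast
        ring
      · rw [Nat.add_zero]
        congr 1
        norm_num
    rw [hp, show t + (1+i) = t+1+i from by omega, pow_add, pow_one]
    ring
  rw [Finset.sum_congr rfl (fun i _ => hterm i), ← Finset.mul_sum,
    Finset.sum_range_succ']
  have hc0 : α ^ 0 * γ (t+1+0) *
      ∏ m ∈ Finset.range 0, F (t+1+m) ((y+θ) + ((m:ℝ)+1)*θ - s (t+1+m+1)) = γ (t+1) := by
    simp
  rw [hc0]
  have hrest : ∑ i ∈ Finset.range k, (α ^ (i+1) * γ (t+1+(i+1)) *
      ∏ m ∈ Finset.range (i+1), F (t+1+m) ((y+θ) + ((m:ℝ)+1)*θ - s (t+1+m+1)))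
      = Gk α θ γ F s k (t+1) (y+θ) := by
    have hR : Gk α θ γ F s k (t+1) (y+θ) = ∑ n ∈ Finset.Icc 1 k, α ^ n * γ (t+1+n) *
        ∏ m ∈ Finset.range n, F (t+1+m) ((y+θ) + ((m : ℝ) + 1) * θ - s (t+1+m+1)) := rfl
    rw [hR, ← Finset.Ico_add_one_right_eq_Icc, Finset.sum_Ico_eq_sum_range]
    have hr2 : k + 1 - 1 = k := by omega
    rw [hr2]
    apply Finset.sum_congr rfl
    intro i _
    rw [show 1 + i = i + 1 from by omega, show t+1+(i+1) = t+1+i+1 from by omega]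
  rw [hrest]
  ring


lemma VW_facts {α θ : ℝ} {γ : ℕ → ℝ} {F : ℕ → ℝ → ℝ} {s SU : ℕ → ℝ}
    (hα0 : 0 ≤ α) (hθ0 : 0 ≤ θ)
    (hF0 : ∀ i x, 0 ≤ F i x) (hFm : ∀ i x y, x ≤ y → F i x ≤ F i y) :
    ∀ k t, (∀ u, u ≤ t + k → 0 ≤ γ u) →
      ((∀ x y : ℝ, x ≤ y → (VW α θ γ F s SU k).1 t x ≤ (VW α θ γ F s SU k).1 t y)
      ∧ (∀ x : ℝ, 0 ≤ (VW α θ γ F s SU k).1 t x))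
      ∧ ((∀ x y : ℝ, x ≤ y → (VW α θ γ F s SU k).2 t x ≤ (VW α θ γ F s SU k).2 t y)
      ∧ (∀ x : ℝ, 0 ≤ (VW α θ γ F s SU k).2 t x)) := by
  intro k
  induction k with
  | zero =>
    intro t hγ
    simp [VW]
  | succ k ih =>
    intro t hγ
    have hγ' : ∀ u, u ≤ (t+1) + k → 0 ≤ γ u := fun u hu => hγ u (by omega)
    have ihW := (ih (t+1) hγ').2
    have hγIcc : ∀ n, n ≤ k + 1 → 0 ≤ γ (t + n) := fun n hn => hγ (t+n) (by omega)
    have hGn : ∀ y : ℝ, 0 ≤ Gk α θ γ F s (k+1) t y :=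
      fun y => Gk_nonneg hα0 hF0 hγIcc
    have hGm : ∀ y y' : ℝ, y ≤ y' → Gk α θ γ F s (k+1) t y ≤ Gk α θ γ F s (k+1) t y' :=
      fun y y' h => Gk_mono hα0 hF0 hFm hγIcc h
    have hγt : 0 ≤ γ t := hγ t (by omega)
    constructor
    · constructor
      · intro x y hxy
        show θ * Gk α θ γ F s (k+1) t x + α * (VW α θ γ F s SU k).2 (t+1) (x + θ)
          ≤ θ * Gk α θ γ F s (k+1) t y + α * (VW α θ γ F s SU k).2 (t+1) (y + θ)
        have h1 := mul_le_mul_of_nonneg_left (hGm x y hxy) hθ0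
        have h2 := mul_le_mul_of_nonneg_left (ihW.1 (x+θ) (y+θ) (by linarith)) hα0
        linarith
      · intro x
        show 0 ≤ θ * Gk α θ γ F s (k+1) t x + α * (VW α θ γ F s SU k).2 (t+1) (x + θ)
        have := ihW.2 (x+θ)
        have := hGn x
        positivity
    · constructor
      · intro x y hxy
        show θ * γ t + θ * Gk α θ γ F s (k+1) t (SU t)
            + (θ * Gk α θ γ F s (k+1) t (max x (SU t))
               + α * (VW α θ γ F s SU k).2 (t+1) (max x (SU t) + θ))
          ≤ θ * γ t + θ * Gk α θ γ F s (k+1) t (SU t)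
            + (θ * Gk α θ γ F s (k+1) t (max y (SU t))
               + α * (VW α θ γ F s SU k).2 (t+1) (max y (SU t) + θ))
        have hm : max x (SU t) ≤ max y (SU t) := max_le_max hxy le_rfl
        have h1 := mul_le_mul_of_nonneg_left (hGm _ _ hm) hθ0
        have h2 := mul_le_mul_of_nonneg_left
          (ihW.1 (max x (SU t) + θ) (max y (SU t) + θ) (by linarith)) hα0
        linarith
      · intro x
        show 0 ≤ θ * γ t + θ * Gk α θ γ F s (k+1) t (SU t)
            + (θ * Gk α θ γ F s (k+1) t (max x (SU t))
               + α * (VW α θ γ F s SU k).2 (t+1) (max x (SU t) + θ))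
        have h1 := ihW.2 (max x (SU t) + θ)
        have h2 := hGn (SU t)
        have h3 := hGn (max x (SU t))
        positivity

lemma VW_unroll {α θ : ℝ} {γ : ℕ → ℝ} {F : ℕ → ℝ → ℝ} {s SU : ℕ → ℝ} :
    ∀ k t (mu : ℕ → ℝ), (∀ i, mu (i+1) = max (mu i) (SU (t+i)) + θ) →
    (VW α θ γ F s SU (k+1)).2 t (mu 0) =
      θ * ∑ i ∈ Finset.range (k+1), α ^ i * γ (t+i)
      + θ * ∑ i ∈ Finset.range (k+1), ∑ n ∈ Finset.Icc 1 (k+1-i),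
          α ^ (n+i) * γ (t+i+n) *
            ((∏ m ∈ Finset.range n, F (t+i+m) (SU (t+i) + ((m:ℝ)+1) * θ - s (t+i+m+1)))
             + ∏ m ∈ Finset.range n, F (t+i+m) (max (mu i) (SU (t+i)) + ((m:ℝ)+1) * θ - s (t+i+m+1))) := by
  intro k
  induction k with
  | zero =>
    intro t mu hmu
    show θ * γ t + θ * Gk α θ γ F s 1 t (SU t)
        + (θ * Gk α θ γ F s 1 t (max (mu 0) (SU t)) + α * 0) = _
    have hG : ∀ y : ℝ, Gk α θ γ F s 1 t y
        = α ^ 1 * γ (t+1) * ∏ m ∈ Finset.range 1, F (t+m) (y + ((m:ℝ)+1) * θ - s (t+m+1)) := by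
      intro y
      have : Gk α θ γ F s 1 t y = ∑ n ∈ Finset.Icc 1 1, α ^ n * γ (t + n) *
        ∏ m ∈ Finset.range n, F (t + m) (y + ((m : ℝ) + 1) * θ - s (t + m + 1)) := rfl
      rw [this, Finset.Icc_self, Finset.sum_singleton]
    rw [hG, hG]
    simp [Finset.sum_range_one, Finset.prod_range_one, Finset.Icc_self]
    ring
  | succ k ih =>
    intro t mu hmu
    have hmu' : ∀ i, (fun i => mu (i+1)) (i+1) = max ((fun i => mu (i+1)) i) (SU ((t+1)+i)) + θ := by
      intro i
      have := hmu (i+1)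
      simpa [show t + (i+1) = t + 1 + i from by omega] using this
    have hIH := ih (t+1) (fun i => mu (i+1)) hmu'
    have hmu1 : mu 1 = max (mu 0) (SU t) + θ := by simpa using hmu 0
    show θ * γ t + θ * Gk α θ γ F s (k+2) t (SU t)
        + (θ * Gk α θ γ F s (k+2) t (max (mu 0) (SU t))
           + α * (VW α θ γ F s SU (k+1)).2 (t+1) (max (mu 0) (SU t) + θ)) = _
    beta_reduce at hIH
    simp only [Nat.zero_add] at hIH
    rw [← hmu1]
    rw [hIH]
    have hA : ∑ i ∈ Finset.range (k+2), α^i * γ (t+i)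
        = γ t + α * ∑ i ∈ Finset.range (k+1), α^i * γ (t+1+i) := by
      rw [Finset.sum_range_succ', Finset.mul_sum]
      simp only [pow_zero, one_mul, Nat.add_zero]
      rw [add_comm]
      congr 1
      apply Finset.sum_congr rfl
      intro i _
      rw [show t + (i+1) = t+1+i from by omega, pow_succ]
      ring
    have hGkdef : ∀ (Y:ℝ), Gk α θ γ F s (k+2) t Y = ∑ n ∈ Finset.Icc 1 (k+2), α ^ n * γ (t + n) *
        ∏ m ∈ Finset.range n, F (t + m) (Y + ((m : ℝ) + 1) * θ - s (t + m + 1)) := fun _ => rfl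
    have hB : ∑ i ∈ Finset.range (k+2), (∑ n ∈ Finset.Icc 1 (k+2-i), α^(n+i) * γ (t+i+n) *
          ((∏ m ∈ Finset.range n, F (t+i+m) (SU (t+i) + ((m:ℝ)+1)*θ - s (t+i+m+1)))
           + ∏ m ∈ Finset.range n, F (t+i+m) (max (mu i) (SU (t+i)) + ((m:ℝ)+1)*θ - s (t+i+m+1))))
        = (Gk α θ γ F s (k+2) t (SU t) + Gk α θ γ F s (k+2) t (max (mu 0) (SU t)))
          + α * ∑ i ∈ Finset.range (k+1), (∑ n ∈ Finset.Icc 1 (k+1-i), α^(n+i) * γ (t+1+i+n) *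
              ((∏ m ∈ Finset.range n, F (t+1+i+m) (SU (t+1+i) + ((m:ℝ)+1)*θ - s (t+1+i+m+1)))
               + ∏ m ∈ Finset.range n, F (t+1+i+m) (max (mu (i+1)) (SU (t+1+i)) + ((m:ℝ)+1)*θ - s (t+1+i+m+1)))) := by
      rw [Finset.sum_range_succ']
      have h0 : ∑ n ∈ Finset.Icc 1 (k+2-0), α^(n+0) * γ (t+0+n) *
          ((∏ m ∈ Finset.range n, F (t+0+m) (SU (t+0) + ((m:ℝ)+1)*θ - s (t+0+m+1)))
           + ∏ m ∈ Finset.range n, F (t+0+m) (max (mu 0) (SU (t+0)) + ((m:ℝ)+1)*θ - s (t+0+m+1)))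
          = Gk α θ γ F s (k+2) t (SU t) + Gk α θ γ F s (k+2) t (max (mu 0) (SU t)) := by
        simp only [Nat.add_zero, Nat.sub_zero]
        rw [hGkdef, hGkdef, ← Finset.sum_add_distrib]
        apply Finset.sum_congr rfl
        intro n _
        ring
      have hS : ∑ i ∈ Finset.range (k+1), (∑ n ∈ Finset.Icc 1 (k+2-(i+1)), α^(n+(i+1)) * γ (t+(i+1)+n) *
          ((∏ m ∈ Finset.range n, F (t+(i+1)+m) (SU (t+(i+1)) + ((m:ℝ)+1)*θ - s (t+(i+1)+m+1)))
           + ∏ m ∈ Finset.range n, F (t+(i+1)+m) (max (mu (i+1)) (SU (t+(i+1))) + ((m:ℝ)+1)*θ - s (t+(i+1)+m+1))))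
          = α * ∑ i ∈ Finset.range (k+1), (∑ n ∈ Finset.Icc 1 (k+1-i), α^(n+i) * γ (t+1+i+n) *
              ((∏ m ∈ Finset.range n, F (t+1+i+m) (SU (t+1+i) + ((m:ℝ)+1)*θ - s (t+1+i+m+1)))
               + ∏ m ∈ Finset.range n, F (t+1+i+m) (max (mu (i+1)) (SU (t+1+i)) + ((m:ℝ)+1)*θ - s (t+1+i+m+1)))) := by
        rw [Finset.mul_sum]
        apply Finset.sum_congr rfl
        intro i _
        rw [show t+(i+1) = t+1+i from by omega, show k+2-(i+1) = k+1-i from by omega,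
          Finset.mul_sum]
        apply Finset.sum_congr rfl
        intro n _
        rw [show n+(i+1) = (n+i)+1 from by omega, pow_succ]
        ring
      rw [h0, hS]
      ring
    rw [hA, hB]
    ring
set_option maxHeartbeats 2000000 in
theorem stmt17
    (T : ℕ) (hT : 2 ≤ T)
    (α : ℝ) (hα0 : 0 < α) (hα1 : α ≤ 1)
    (K : ℕ → ℝ) (hK0 : ∀ t, t < T → 0 ≤ K t)
    (hKmono : ∀ t, t + 2 ≤ T → α * K (t + 1) ≤ K t)
    (ν : ℕ → MeasureTheory.Measure ℝ)
    (hprob : ∀ t, MeasureTheory.IsProbabilityMeasure (ν t))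
    (hpos : ∀ t, ν t (Set.Iio 0) = 0)
    (F : ℕ → ℝ → ℝ) (hF : ∀ t x, F t x = (ν t (Set.Iic x)).toReal)
    (C : ℕ → ℝ → ℝ)
    (hCconv : ∀ t, t < T → ConvexOn ℝ Set.univ (C t))
    (hCcoer : ∀ t, t < T → Filter.Tendsto (C t) (Filter.cocompact ℝ) Filter.atTop)
    (θ : ℝ) (hθ : 0 < θ)
    (f : ℕ → ℤ → ℝ)
    (hf : ∀ t (n : ℤ), f t n = F t (((n : ℝ) + 1) * θ) - F t ((n : ℝ) * θ))
    (Cm SU : ℕ → ℝ)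
    (hCm : ∀ t, t < T → IsLeast {x | ∀ y, C t x ≤ C t y} (Cm t))
    (hSU : ∀ t, t < T → ∀ n0 : ℤ, (n0 : ℝ) * θ < Cm t → Cm t ≤ ((n0 : ℝ) + 1) * θ →
      IsLeast {w | (∃ m : ℤ, w = (m : ℝ) * θ) ∧ Cm t ≤ w ∧ C t ((n0 : ℝ) * θ) + K t < C t w} (SU t))
    (s S : ℕ → ℝ) (I Ibar : ℕ → ℝ)
    (hsT1a : s (T - 1) ≤ Cm (T - 1))
    (hsT1b : C (T - 1) (s (T - 1)) = C (T - 1) (Cm (T - 1)) + K (T - 1))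
    (hIbarT1 : Ibar (T - 1) = s (T - 1))
    (hI : ∀ t, t + 2 ≤ T →
      IsGreatest {w | (∃ m : ℤ, w = (m : ℝ) * θ) ∧ w < min (Ibar (t + 1) - θ) (Cm t)} (I t))
    (hIbar : ∀ t, t + 2 ≤ T →
      IsGreatest {w | (∃ m : ℤ, w = (m : ℝ) * θ) ∧ w ≤ I t ∧ C t (I t) + K t < C t w} (Ibar t - θ))
    (H V : ℕ → ℝ → ℝ)
    (hHT1 : ∀ y, H (T - 1) y = C (T - 1) y)
    (hST1 : S (T - 1) = Cm (T - 1))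
    (hV : ∀ t, t < T → ∀ y, V t y = if y < s t then H t (S t) + K t else H t y)
    (hHrec : ∀ t, t + 2 ≤ T → ∀ y,
      H t y = C t y + α * ∑' n : ℕ, V (t + 1) (y - ((n : ℝ) - 1) * θ) * f t ((n : ℤ) - 1))
    (hSdef : ∀ t, t + 2 ≤ T →
      IsGreatest {w | (∃ m : ℤ, w = (m : ℝ) * θ) ∧ I t ≤ w ∧ w ≤ SU t ∧
        ∀ u, (∃ n : ℤ, u = (n : ℝ) * θ) → I t ≤ u → u ≤ SU t → H t w ≤ H t u} (S t))
    (hsdef0 : ∀ t, t + 2 ≤ T → K t = 0 → s t = S t)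
    (hsdef1 : ∀ t, t + 2 ≤ T → 0 < K t →
      IsLeast {w | (∃ m : ℤ, w = (m : ℝ) * θ) ∧ Ibar t ≤ w ∧ w ≤ S t ∧ H t w ≤ H t (S t) + K t} (s t))
    (γ : ℕ → ℝ) (hγ : ∀ t, t < T → 0 ≤ γ t)
    (hLip : ∀ t, t < T → ∀ x y, |C t x - C t y| ≤ γ t * |x - y|)
    (psi phi : ℕ → ℝ → ℝ → ℝ)
    (hpsiT1 : ∀ x y : ℝ, psi (T - 1) x y = γ (T - 1) * x)
    (hphiT1 : ∀ x y : ℝ, phi (T - 1) x y = if y < s (T - 1) then 0 else γ (T - 1) * x)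
    (hpsiA : ∀ t, t + 2 ≤ T → ∀ x y : ℝ, y < s (t + 1) - θ → psi t x y = γ t * x)
    (hpsiB : ∀ t, t + 2 ≤ T → ∀ x y : ℝ, s (t + 1) - θ ≤ y → ∀ n : ℤ,
      ((n : ℝ) - 1) * θ ≤ y - s (t + 1) → y - s (t + 1) < (n : ℝ) * θ →
      psi t x y = γ t * x
        + α * ∑ j ∈ Finset.Icc (-1 : ℤ) (n - 1), phi (t + 1) x (y - (j : ℝ) * θ) * f t j)
    (hphi : ∀ t, t + 2 ≤ T → ∀ x y : ℝ, phi t x y =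
      if y < s t then 0 else if y - x < s t then psi t (y - s t) y else psi t x y)
    (psib phib : ℕ → ℝ → ℝ → ℝ)
    (hpsibT1 : ∀ x y : ℝ, psib (T - 1) x y = γ (T - 1) * x)
    (hphibT1 : ∀ x y : ℝ, phib (T - 1) x y = if y < s (T - 1) then 0 else γ (T - 1) * x)
    (hpsibA : ∀ t, t + 2 ≤ T → ∀ x y : ℝ, y < s (t + 1) - θ → psib t x y = γ t * x)
    (hpsibB : ∀ t, t + 2 ≤ T → ∀ x y : ℝ, s (t + 1) - θ ≤ y → ∀ n : ℤ,
      ((n : ℝ) - 1) * θ ≤ y - s (t + 1) → y - s (t + 1) < (n : ℝ) * θ →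
      psib t x y = γ t * x
        + α * ∑ j ∈ Finset.Icc (-1 : ℤ) (n - 1), phib (t + 1) x (y - (j : ℝ) * θ) * f t j)
    (hphib : ∀ t, t + 2 ≤ T → ∀ x y : ℝ, phib t x y =
      if y < s t then 0 else if y - x < s t then psib t (y - s t + θ) y else psib t x y)
    (om omb : ℕ → ℝ → ℝ) (eta : ℕ → ℝ)
    (homT1 : ∀ x, om (T - 1) x = 0) (hombT1 : ∀ x, omb (T - 1) x = 0) (hetaT1 : eta (T - 1) = 0)
    (hom : ∀ t, t + 2 ≤ T → ∀ x, om t x =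
      psi t θ x - γ t * θ + α * ∑' n : ℕ, omb (t + 1) (x - ((n : ℝ) - 1) * θ) * f t ((n : ℤ) - 1))
    (heta : ∀ t, t + 2 ≤ T → eta t = psib t θ (SU t) + om t (SU t))
    (homb : ∀ t, t + 2 ≤ T → ∀ x, omb t x = if x ≤ SU t then eta t else max (eta t) (om t x))
    :
    ∀ t, t + 2 ≤ T → ∀ j : ℤ, ∀ mu : ℕ → ℝ,
      mu 0 = (j : ℝ) * θ →
      (∀ i, mu (i + 1) = max (mu i) (SU (t + i)) + θ) →
      (omb t ((j : ℝ) * θ) ≤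
        θ * ∑ i ∈ Finset.range (T - 1 - t), α ^ i * γ (t + i)
          + θ * ∑ i ∈ Finset.range (T - 1 - t), ∑ n ∈ Finset.Icc 1 (T - 1 - t - i),
              α ^ (n + i) * γ (t + i + n) *
                ((∏ m ∈ Finset.range n,
                    F (t + i + m) (SU (t + i) + ((m : ℝ) + 1) * θ - s (t + i + m + 1)))
                 + ∏ m ∈ Finset.range n,
                    F (t + i + m) (max (mu i) (SU (t + i)) + ((m : ℝ) + 1) * θ - s (t + i + m + 1))))
      ∧ (θ * ∑ i ∈ Finset.range (T - 1 - t), α ^ i * γ (t + i)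
          + θ * ∑ i ∈ Finset.range (T - 1 - t), ∑ n ∈ Finset.Icc 1 (T - 1 - t - i),
              α ^ (n + i) * γ (t + i + n) *
                ((∏ m ∈ Finset.range n,
                    F (t + i + m) (SU (t + i) + ((m : ℝ) + 1) * θ - s (t + i + m + 1)))
                 + ∏ m ∈ Finset.range n,
                    F (t + i + m) (max (mu i) (SU (t + i)) + ((m : ℝ) + 1) * θ - s (t + i + m + 1))))
        ≤ θ * ∑ i ∈ Finset.range (T - 1 - t), α ^ i * γ (t + i)
          + 2 * θ * ∑ i ∈ Finset.range (T - 1 - t), ∑ n ∈ Finset.Icc 1 (T - 1 - t - i),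
              α ^ (n + i) * γ (t + i + n) := by
  -- basic facts about F and f
  have hθ0 : (0:ℝ) ≤ θ := hθ.le
  have hα0' : (0:ℝ) ≤ α := hα0.le
  have hF0 : ∀ i x, 0 ≤ F i x := fun i x => by rw [hF]; exact ENNReal.toReal_nonneg
  have hFm : ∀ i x y, x ≤ y → F i x ≤ F i y := by
    intro i x y hxy
    rw [hF, hF]
    have := hprob i
    exact ENNReal.toReal_mono (measure_ne_top _ _) (measure_mono (Set.Iic_subset_Iic.2 hxy))
  have hF1 : ∀ i x, F i x ≤ 1 := by
    intro i x
    rw [hF]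
    have := hprob i
    calc (ν i (Set.Iic x)).toReal ≤ (ν i Set.univ).toReal :=
          ENNReal.toReal_mono (measure_ne_top _ _) (measure_mono (Set.subset_univ _))
      _ = 1 := by rw [measure_univ]; simp
  have hFneg : ∀ i (x:ℝ), x < 0 → F i x = 0 := by
    intro i x hx
    rw [hF]
    have h0 : ν i (Set.Iic x) = 0 :=
      measure_mono_null (fun y hy => lt_of_le_of_lt hy hx) (hpos i)
    simp [h0]
  have hf0 : ∀ i (n:ℤ), 0 ≤ f i n := by
    intro i n
    rw [hf i n]
    have h1 : ((n:ℝ))*θ ≤ ((n:ℝ)+1)*θ := by nlinarith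
    linarith [hFm i _ _ h1]
  -- grid helpers
  have hgridsub : ∀ (y:ℝ), (∃ m:ℤ, y = (m:ℝ)*θ) → ∀ j:ℤ, (∃ m:ℤ, y - (j:ℝ)*θ = (m:ℝ)*θ) := by
    rintro y ⟨m, rfl⟩ j
    exact ⟨m - j, by push_cast; ring⟩
  have hgrideq : ∀ (a b : ℝ), (∃ m:ℤ, a = (m:ℝ)*θ) → (∃ m:ℤ, b = (m:ℝ)*θ) →
      0 ≤ a - b → a - b < θ → a = b := by
    rintro a b ⟨ma, rfl⟩ ⟨mb, rfl⟩ h1 h2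
    have h3 : ((ma - mb : ℤ):ℝ) * θ < 1 * θ := by push_cast; linarith
    have h4 : (0:ℝ)*θ ≤ ((ma - mb : ℤ):ℝ) * θ := by push_cast; linarith
    have h5 : ((ma - mb:ℤ):ℝ) < 1 := lt_of_mul_lt_mul_right h3 hθ0
    have h6 : (0:ℝ) ≤ ((ma-mb:ℤ):ℝ) := nonneg_of_mul_nonneg_right ?_ hθ
    case _ =>
      have h7 : ma - mb < 1 := by exact_mod_cast h5
      have h8 : 0 ≤ ma - mb := by exact_mod_cast h6
      have : ma = mb := by omega
      rw [this]
    case _ => linarith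
  -- SU is on the grid
  have hSUgrid : ∀ u, u < T → ∃ m:ℤ, SU u = (m:ℝ)*θ := by
    intro u hu
    have hθne : θ ≠ 0 := ne_of_gt hθ
    set c := Cm u with hc
    set n0 : ℤ := ⌈c / θ⌉ - 1 with hn0
    have h1 : (n0:ℝ)*θ < c := by
      have hlt : ((n0:ℝ)) < c / θ := by
        have := Int.ceil_lt_add_one (c / θ)
        push_cast [hn0]
        linarith
      calc (n0:ℝ)*θ < (c/θ)*θ := by nlinarith
        _ = c := by field_simp
    have h2 : c ≤ ((n0:ℝ)+1)*θ := by
      have hle : c / θ ≤ ((n0:ℝ)+1) := by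
        have := Int.le_ceil (c / θ)
        push_cast [hn0]
        linarith
      calc c = (c/θ)*θ := by field_simp
        _ ≤ ((n0:ℝ)+1)*θ := by nlinarith
    exact ((hSU u hu n0 h1 h2).1).1
  -- s is on the grid below T-1
  have hsgrid : ∀ u, u + 2 ≤ T → ∃ m:ℤ, s u = (m:ℝ)*θ := by
    intro u hu
    rcases eq_or_lt_of_le (hK0 u (by omega)) with hK | hK
    · rw [hsdef0 u hu hK.symm]
      exact ((hSdef u hu).1).1
    · exact ((hsdef1 u hu hK).1).1
  -- telescoping sums of f
  have htel : ∀ u (d : ℤ), (-1:ℤ) ≤ d →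
      ∑ j ∈ Finset.Icc (-1:ℤ) d, f u j = F u (((d:ℝ)+1)*θ) - F u ((-1:ℝ)*θ) := by
    intro u
    refine Int.le_induction ?_ ?_
    · rw [Finset.Icc_self, Finset.sum_singleton, hf]
      norm_num
    · intro d hd ih
      have hins : Finset.Icc (-1:ℤ) (d+1) = insert (d+1) (Finset.Icc (-1:ℤ) d) := by
        ext x
        simp only [Finset.mem_Icc, Finset.mem_insert]
        omega
      rw [hins, Finset.sum_insert (by simp only [Finset.mem_Icc]; omega), ih, hf]
      push_cast
      ring
  have hpartle : ∀ u (N:ℕ), ∑ n ∈ Finset.range N, f u ((n:ℤ)-1) ≤ 1 := by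
    intro u N
    have hterm : ∀ n:ℕ, f u ((n:ℤ)-1)
        = F u (((((n+1:ℕ)):ℝ) - 1)*θ) - F u ((((n:ℕ):ℝ) - 1)*θ) := by
      intro n
      rw [hf]
      have e1 : ((((n:ℤ)-1 : ℤ)):ℝ) + 1 = (((n+1:ℕ)):ℝ) - 1 := by push_cast; ring
      have e2 : ((((n:ℤ)-1 : ℤ)):ℝ) = ((n:ℕ):ℝ) - 1 := by push_cast; ring
      rw [e1, e2]
    have hsum : ∑ n ∈ Finset.range N, f u ((n:ℤ)-1)
        = F u ((((N:ℕ):ℝ) - 1)*θ) - F u ((((0:ℕ):ℝ) - 1)*θ) := by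
      rw [Finset.sum_congr rfl fun n _ => hterm n]
      exact Finset.sum_range_sub (fun n : ℕ => F u ((((n:ℕ):ℝ) - 1)*θ)) N
    have hzero : F u ((((0:ℕ):ℝ) - 1)*θ) = 0 := by
      apply hFneg
      norm_num
      linarith
    rw [hsum, hzero]
    have := hF1 u ((((N:ℕ):ℝ) - 1)*θ)
    linarith
  -- the main downward induction
  have hbundle : ∀ k t, t + 1 + k = T →
      ((∀ x : ℝ, 0 ≤ x → x ≤ θ → ∀ y : ℝ, (∃ m:ℤ, y = (m:ℝ)*θ) →
          γ t * x ≤ psi t x y ∧ psi t x y ≤ γ t * x + θ * Gk α θ γ F s k t y)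
      ∧ (∀ x : ℝ, 0 ≤ x → x ≤ θ → ∀ y : ℝ, (∃ m:ℤ, y = (m:ℝ)*θ) →
          γ t * x ≤ psib t x y ∧ psib t x y ≤ γ t * x + θ * Gk α θ γ F s k t y)
      ∧ (∀ x : ℝ, (∃ m:ℤ, x = (m:ℝ)*θ) →
          0 ≤ om t x ∧ om t x ≤ (VW α θ γ F s SU k).1 t x)
      ∧ (∀ u : ℝ, (∃ m:ℤ, u = (m:ℝ)*θ) →
          0 ≤ omb t u ∧ omb t u ≤ (VW α θ γ F s SU k).2 t u)) := by
    intro k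
    induction k with
    | zero =>
      intro t htk
      have htt : t = T - 1 := by omega
      subst htt
      refine ⟨?_, ?_, ?_, ?_⟩
      · intro x hx0 hxθ y _
        rw [hpsiT1 x y, Gk_zero]
        constructor
        · exact le_refl _
        · simp
      · intro x hx0 hxθ y _
        rw [hpsibT1 x y, Gk_zero]
        constructor
        · exact le_refl _
        · simp
      · intro x _
        rw [homT1 x]
        exact ⟨le_refl _, le_refl _⟩
      · intro u _
        rw [hombT1 u]
        exact ⟨le_refl _, le_refl _⟩
    | succ k ih =>
      intro t htk
      have ht2 : t + 2 ≤ T := by omega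
      have htT : t < T := by omega
      have ht1T : t + 1 < T := by omega
      have hγt : 0 ≤ γ t := hγ t htT
      have hγt1 : 0 ≤ γ (t+1) := hγ (t+1) ht1T
      obtain ⟨ihψ, ihψb, ihom, ihomb⟩ := ih (t+1) (by omega)
      have hγIcc : ∀ n, n ≤ k → 0 ≤ γ (t + 1 + n) := fun n hn => hγ _ (by omega)
      have hγIcc1 : ∀ n, n ≤ k+1 → 0 ≤ γ (t + n) := fun n hn => hγ _ (by omega)
      have hGn : ∀ y:ℝ, 0 ≤ Gk α θ γ F s k (t+1) y := fun y => Gk_nonneg hα0' hF0 hγIcc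
      have hGn' : ∀ y:ℝ, 0 ≤ Gk α θ γ F s (k+1) t y := fun y => Gk_nonneg hα0' hF0 hγIcc1
      have hGm : ∀ y y':ℝ, y ≤ y' → Gk α θ γ F s k (t+1) y ≤ Gk α θ γ F s k (t+1) y' :=
        fun y y' h => Gk_mono hα0' hF0 hFm hγIcc h
      -- phi bound
      have hφ : ∀ x:ℝ, 0 ≤ x → x ≤ θ → ∀ u:ℝ, (∃ m:ℤ, u = (m:ℝ)*θ) →
          0 ≤ phi (t+1) x u ∧ phi (t+1) x u ≤ θ * γ (t+1) + θ * Gk α θ γ F s k (t+1) u := by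
        intro x hx0 hxθ u hu
        rcases Nat.eq_zero_or_pos k with hk | hk
        · subst hk
          have htt : t + 1 = T - 1 := by omega
          rw [htt, hphiT1 x u, Gk_zero]
          have hγT : 0 ≤ γ (T-1) := hγ _ (by omega)
          split_ifs
          · constructor
            · exact le_refl _
            · nlinarith
          · constructor
            · exact mul_nonneg hγT hx0
            · nlinarith
        · have hk1 : t + 1 + 2 ≤ T := by omega
          rw [hphi (t+1) hk1 x u]
          split_ifs with h1 h2
          · refine ⟨le_refl _, ?_⟩
            have h3 := hGn u
            nlinarith
          · have hs1 : s (t+1) ≤ u := not_lt.1 h1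
            have hx' : u - s (t+1) < x := by linarith
            have h3 := ihψ (u - s (t+1)) (by linarith) (by linarith) u hu
            constructor
            · exact le_trans (mul_nonneg hγt1 (by linarith)) h3.1
            · refine le_trans h3.2 ?_
              nlinarith
          · have h3 := ihψ x hx0 hxθ u hu
            constructor
            · exact le_trans (mul_nonneg hγt1 hx0) h3.1
            · refine le_trans h3.2 ?_
              nlinarith
      -- phib bound
      have hφb : ∀ x:ℝ, 0 ≤ x → x ≤ θ → ∀ u:ℝ, (∃ m:ℤ, u = (m:ℝ)*θ) →
          0 ≤ phib (t+1) x u ∧ phib (t+1) x u ≤ θ * γ (t+1) + θ * Gk α θ γ F s k (t+1) u := by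
        intro x hx0 hxθ u hu
        rcases Nat.eq_zero_or_pos k with hk | hk
        · subst hk
          have htt : t + 1 = T - 1 := by omega
          rw [htt, hphibT1 x u, Gk_zero]
          have hγT : 0 ≤ γ (T-1) := hγ _ (by omega)
          split_ifs
          · constructor
            · exact le_refl _
            · nlinarith
          · constructor
            · exact mul_nonneg hγT hx0
            · nlinarith
        · have hk1 : t + 1 + 2 ≤ T := by omega
          rw [hphib (t+1) hk1 x u]
          split_ifs with h1 h2
          · refine ⟨le_refl _, ?_⟩
            have h3 := hGn u
            nlinarith
          · have hs1 : s (t+1) ≤ u := not_lt.1 h1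
            have hx' : u - s (t+1) < x := by linarith
            have hueq : u = s (t+1) :=
              hgrideq u (s (t+1)) hu (hsgrid (t+1) hk1) (by linarith) (by linarith)
            rw [hueq]
            simp only [sub_self, zero_add]
            have h3 := ihψb θ hθ0 le_rfl (s (t+1)) (hsgrid (t+1) hk1)
            constructor
            · exact le_trans (mul_nonneg hγt1 hθ0) h3.1
            · refine le_trans h3.2 ?_
              have : γ (t+1) * θ = θ * γ (t+1) := mul_comm _ _
              linarith
          · have h3 := ihψb x hx0 hxθ u hu
            constructor
            · exact le_trans (mul_nonneg hγt1 hx0) h3.1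
            · refine le_trans h3.2 ?_
              nlinarith
      -- psi bounds at level t
      have hψ : ∀ x:ℝ, 0 ≤ x → x ≤ θ → ∀ y:ℝ, (∃ m:ℤ, y = (m:ℝ)*θ) →
          γ t * x ≤ psi t x y ∧ psi t x y ≤ γ t * x + θ * Gk α θ γ F s (k+1) t y := by
        intro x hx0 hxθ y hy
        by_cases hylt : y < s (t+1) - θ
        · rw [hpsiA t ht2 x y hylt]
          refine ⟨le_refl _, ?_⟩
          have := hGn' y
          nlinarith
        · push_neg at hylt
          set z := (y - s (t+1)) / θ with hz
          set n : ℤ := ⌊z⌋ + 1 with hn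
          have hzval : z * θ = y - s (t+1) := by
            rw [hz]; field_simp
          have hzn : ((n:ℝ) - 1) * θ ≤ y - s (t+1) := by
            have h1 : ((⌊z⌋:ℝ)) ≤ z := Int.floor_le z
            have h2 : ((n:ℝ) - 1) = (⌊z⌋:ℝ) := by push_cast [hn]; ring
            rw [h2, ← hzval]
            nlinarith
          have hzn2 : y - s (t+1) < (n:ℝ) * θ := by
            have h1 : z < (⌊z⌋:ℝ) + 1 := Int.lt_floor_add_one z
            have h2 : (n:ℝ) = (⌊z⌋:ℝ) + 1 := by push_cast [hn]; ring
            rw [h2, ← hzval]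
            nlinarith
          have hn0 : (0:ℤ) ≤ n := by
            have hz1 : (-1:ℝ) ≤ z := by
              rw [hz, le_div_iff₀ hθ]; linarith
            have := Int.le_floor.2 (by exact_mod_cast hz1 : ((-1:ℤ):ℝ) ≤ z)
            omega
          rw [hpsiB t ht2 x y (by linarith) n hzn hzn2]
          have hBnn : 0 ≤ θ * γ (t+1) + θ * Gk α θ γ F s k (t+1) (y + θ) := by
            have h1 := mul_nonneg hθ0 hγt1
            have h2 := mul_nonneg hθ0 (hGn (y+θ))
            linarith
          constructor
          · have hsum0 : 0 ≤ ∑ j ∈ Finset.Icc (-1:ℤ) (n-1), phi (t+1) x (y - (j:ℝ)*θ) * f t j :=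
              Finset.sum_nonneg fun j hj =>
                mul_nonneg (hφ x hx0 hxθ _ (hgridsub y hy j)).1 (hf0 t j)
            nlinarith
          · have hsumf : ∑ j ∈ Finset.Icc (-1:ℤ) (n-1), f t j = F t ((n:ℝ)*θ) := by
              rw [htel t (n-1) (by omega), hFneg t ((-1:ℝ)*θ) (by nlinarith)]
              have e : (((n-1:ℤ)):ℝ) + 1 = (n:ℝ) := by push_cast; ring
              rw [e]
              ring
            have hsumle : ∑ j ∈ Finset.Icc (-1:ℤ) (n-1), phi (t+1) x (y - (j:ℝ)*θ) * f t j
                ≤ (θ * γ (t+1) + θ * Gk α θ γ F s k (t+1) (y+θ)) * F t (y + θ - s (t+1)) := by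
              calc ∑ j ∈ Finset.Icc (-1:ℤ) (n-1), phi (t+1) x (y - (j:ℝ)*θ) * f t j
                  ≤ ∑ j ∈ Finset.Icc (-1:ℤ) (n-1),
                      (θ * γ (t+1) + θ * Gk α θ γ F s k (t+1) (y+θ)) * f t j := by
                    apply Finset.sum_le_sum
                    intro j hj
                    have hjm := Finset.mem_Icc.1 hj
                    have hj1 : (-1:ℝ) ≤ (j:ℝ) := by exact_mod_cast hjm.1
                    have hyj : y - (j:ℝ)*θ ≤ y + θ := by nlinarith
                    have h1 := (hφ x hx0 hxθ (y - (j:ℝ)*θ) (hgridsub y hy j)).2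
                    have h2 := mul_le_mul_of_nonneg_left (hGm _ _ hyj) hθ0
                    exact mul_le_mul_of_nonneg_right (by linarith) (hf0 t j)
                _ = (θ * γ (t+1) + θ * Gk α θ γ F s k (t+1) (y+θ))
                      * ∑ j ∈ Finset.Icc (-1:ℤ) (n-1), f t j := (Finset.mul_sum _ _ _).symm
                _ = (θ * γ (t+1) + θ * Gk α θ γ F s k (t+1) (y+θ)) * F t ((n:ℝ)*θ) := by
                    rw [hsumf]
                _ ≤ (θ * γ (t+1) + θ * Gk α θ γ F s k (t+1) (y+θ)) * F t (y + θ - s (t+1)) := by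
                    apply mul_le_mul_of_nonneg_left _ hBnn
                    apply hFm
                    nlinarith
            rw [Gk_succ]
            have hring : θ * (α * F t (y + θ - s (t+1)) * (γ (t+1) + Gk α θ γ F s k (t+1) (y+θ)))
                = α * ((θ * γ (t+1) + θ * Gk α θ γ F s k (t+1) (y+θ)) * F t (y + θ - s (t+1))) := by
              ring
            have h4 := mul_le_mul_of_nonneg_left hsumle hα0'
            linarith
      -- psib bounds at level t
      have hψb : ∀ x:ℝ, 0 ≤ x → x ≤ θ → ∀ y:ℝ, (∃ m:ℤ, y = (m:ℝ)*θ) →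
          γ t * x ≤ psib t x y ∧ psib t x y ≤ γ t * x + θ * Gk α θ γ F s (k+1) t y := by
        intro x hx0 hxθ y hy
        by_cases hylt : y < s (t+1) - θ
        · rw [hpsibA t ht2 x y hylt]
          refine ⟨le_refl _, ?_⟩
          have := hGn' y
          nlinarith
        · push_neg at hylt
          set z := (y - s (t+1)) / θ with hz
          set n : ℤ := ⌊z⌋ + 1 with hn
          have hzval : z * θ = y - s (t+1) := by
            rw [hz]; field_simp
          have hzn : ((n:ℝ) - 1) * θ ≤ y - s (t+1) := by
            have h1 : ((⌊z⌋:ℝ)) ≤ z := Int.floor_le z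
            have h2 : ((n:ℝ) - 1) = (⌊z⌋:ℝ) := by push_cast [hn]; ring
            rw [h2, ← hzval]
            nlinarith
          have hzn2 : y - s (t+1) < (n:ℝ) * θ := by
            have h1 : z < (⌊z⌋:ℝ) + 1 := Int.lt_floor_add_one z
            have h2 : (n:ℝ) = (⌊z⌋:ℝ) + 1 := by push_cast [hn]; ring
            rw [h2, ← hzval]
            nlinarith
          have hn0 : (0:ℤ) ≤ n := by
            have hz1 : (-1:ℝ) ≤ z := by
              rw [hz, le_div_iff₀ hθ]; linarith
            have := Int.le_floor.2 (by exact_mod_cast hz1 : ((-1:ℤ):ℝ) ≤ z)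
            omega
          rw [hpsibB t ht2 x y (by linarith) n hzn hzn2]
          have hBnn : 0 ≤ θ * γ (t+1) + θ * Gk α θ γ F s k (t+1) (y + θ) := by
            have h1 := mul_nonneg hθ0 hγt1
            have h2 := mul_nonneg hθ0 (hGn (y+θ))
            linarith
          constructor
          · have hsum0 : 0 ≤ ∑ j ∈ Finset.Icc (-1:ℤ) (n-1), phib (t+1) x (y - (j:ℝ)*θ) * f t j :=
              Finset.sum_nonneg fun j hj =>
                mul_nonneg (hφb x hx0 hxθ _ (hgridsub y hy j)).1 (hf0 t j)
            nlinarith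
          · have hsumf : ∑ j ∈ Finset.Icc (-1:ℤ) (n-1), f t j = F t ((n:ℝ)*θ) := by
              rw [htel t (n-1) (by omega), hFneg t ((-1:ℝ)*θ) (by nlinarith)]
              have e : (((n-1:ℤ)):ℝ) + 1 = (n:ℝ) := by push_cast; ring
              rw [e]
              ring
            have hsumle : ∑ j ∈ Finset.Icc (-1:ℤ) (n-1), phib (t+1) x (y - (j:ℝ)*θ) * f t j
                ≤ (θ * γ (t+1) + θ * Gk α θ γ F s k (t+1) (y+θ)) * F t (y + θ - s (t+1)) := by
              calc ∑ j ∈ Finset.Icc (-1:ℤ) (n-1), phib (t+1) x (y - (j:ℝ)*θ) * f t j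
                  ≤ ∑ j ∈ Finset.Icc (-1:ℤ) (n-1),
                      (θ * γ (t+1) + θ * Gk α θ γ F s k (t+1) (y+θ)) * f t j := by
                    apply Finset.sum_le_sum
                    intro j hj
                    have hjm := Finset.mem_Icc.1 hj
                    have hj1 : (-1:ℝ) ≤ (j:ℝ) := by exact_mod_cast hjm.1
                    have hyj : y - (j:ℝ)*θ ≤ y + θ := by nlinarith
                    have h1 := (hφb x hx0 hxθ (y - (j:ℝ)*θ) (hgridsub y hy j)).2
                    have h2 := mul_le_mul_of_nonneg_left (hGm _ _ hyj) hθ0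
                    exact mul_le_mul_of_nonneg_right (by linarith) (hf0 t j)
                _ = (θ * γ (t+1) + θ * Gk α θ γ F s k (t+1) (y+θ))
                      * ∑ j ∈ Finset.Icc (-1:ℤ) (n-1), f t j := (Finset.mul_sum _ _ _).symm
                _ = (θ * γ (t+1) + θ * Gk α θ γ F s k (t+1) (y+θ)) * F t ((n:ℝ)*θ) := by
                    rw [hsumf]
                _ ≤ (θ * γ (t+1) + θ * Gk α θ γ F s k (t+1) (y+θ)) * F t (y + θ - s (t+1)) := by
                    apply mul_le_mul_of_nonneg_left _ hBnn
                    apply hFm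
                    nlinarith
            rw [Gk_succ]
            have hring : θ * (α * F t (y + θ - s (t+1)) * (γ (t+1) + Gk α θ γ F s k (t+1) (y+θ)))
                = α * ((θ * γ (t+1) + θ * Gk α θ γ F s k (t+1) (y+θ)) * F t (y + θ - s (t+1))) := by
              ring
            have h4 := mul_le_mul_of_nonneg_left hsumle hα0'
            linarith
      -- om bounds at level t
      have hWfacts := VW_facts (α := α) (θ := θ) (γ := γ) (F := F) (s := s) (SU := SU)
        hα0' hθ0 hF0 hFm k (t+1) (fun u hu => hγ u (by omega))
      have hom' : ∀ x:ℝ, (∃ m:ℤ, x = (m:ℝ)*θ) →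
          0 ≤ om t x ∧ om t x ≤ (VW α θ γ F s SU (k+1)).1 t x := by
        intro x hx
        rw [hom t ht2 x]
        have hψx := hψ θ hθ0 le_rfl x hx
        have hM0 : 0 ≤ (VW α θ γ F s SU k).2 (t+1) (x + θ) := hWfacts.2.2 (x+θ)
        have hgridn : ∀ n:ℕ, (∃ m:ℤ, x - ((n:ℝ)-1)*θ = (m:ℝ)*θ) := by
          intro n
          have hgg := hgridsub x hx ((n:ℤ)-1)
          have hcast : ((((n:ℤ) - 1 : ℤ)):ℝ) = (n:ℝ) - 1 := by push_cast; ring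
          rw [hcast] at hgg
          exact hgg
        have hterm0 : ∀ n:ℕ, 0 ≤ omb (t+1) (x - ((n:ℝ)-1)*θ) * f t ((n:ℤ)-1) := by
          intro n
          exact mul_nonneg (ihomb _ (hgridn n)).1 (hf0 _ _)
        have htsum0 : 0 ≤ ∑' n:ℕ, omb (t+1) (x - ((n:ℝ)-1)*θ) * f t ((n:ℤ)-1) :=
          tsum_nonneg hterm0
        have htsumle : (∑' n:ℕ, omb (t+1) (x - ((n:ℝ)-1)*θ) * f t ((n:ℤ)-1))
            ≤ (VW α θ γ F s SU k).2 (t+1) (x + θ) := by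
          apply Real.tsum_le_of_sum_range_le hterm0
          intro N
          calc ∑ n ∈ Finset.range N, omb (t+1) (x - ((n:ℝ)-1)*θ) * f t ((n:ℤ)-1)
              ≤ ∑ n ∈ Finset.range N, (VW α θ γ F s SU k).2 (t+1) (x + θ) * f t ((n:ℤ)-1) := by
                apply Finset.sum_le_sum
                intro n _
                apply mul_le_mul_of_nonneg_right _ (hf0 _ _)
                have h1 := (ihomb _ (hgridn n)).2
                have h2 : (VW α θ γ F s SU k).2 (t+1) (x - ((n:ℝ)-1)*θ)
                    ≤ (VW α θ γ F s SU k).2 (t+1) (x + θ) := by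
                  apply hWfacts.2.1
                  have := Nat.cast_nonneg (α := ℝ) n
                  nlinarith
                linarith
            _ = (VW α θ γ F s SU k).2 (t+1) (x + θ) * ∑ n ∈ Finset.range N, f t ((n:ℤ)-1) :=
                (Finset.mul_sum _ _ _).symm
            _ ≤ (VW α θ γ F s SU k).2 (t+1) (x + θ) * 1 :=
                mul_le_mul_of_nonneg_left (hpartle t N) hM0
            _ = (VW α θ γ F s SU k).2 (t+1) (x + θ) := mul_one _
        constructor
        · have h5 := mul_nonneg hα0' htsum0
          have h6 := hψx.1
          linarith
        · show _ ≤ θ * Gk α θ γ F s (k+1) t x + α * (VW α θ γ F s SU k).2 (t+1) (x + θ)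
          have h5 := mul_le_mul_of_nonneg_left htsumle hα0'
          have h6 := hψx.2
          linarith
      -- eta bound at level t
      have heta' : 0 ≤ eta t ∧ eta t ≤ (θ * γ t + θ * Gk α θ γ F s (k+1) t (SU t))
          + (VW α θ γ F s SU (k+1)).1 t (SU t) := by
        rw [heta t ht2]
        have h1 := hψb θ hθ0 le_rfl (SU t) (hSUgrid t htT)
        have h2 := hom' (SU t) (hSUgrid t htT)
        constructor
        · have h3 := mul_nonneg hγt hθ0
          linarith [h1.1, h2.1]
        · have hc : γ t * θ = θ * γ t := mul_comm _ _
          linarith [h1.2, h2.2]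
      -- omb bound at level t
      have hWfull := VW_facts (α := α) (θ := θ) (γ := γ) (F := F) (s := s) (SU := SU)
        hα0' hθ0 hF0 hFm (k+1) t (fun u hu => hγ u (by omega))
      have homb' : ∀ u:ℝ, (∃ m:ℤ, u = (m:ℝ)*θ) →
          0 ≤ omb t u ∧ omb t u ≤ (VW α θ γ F s SU (k+1)).2 t u := by
        intro u hu
        rw [homb t ht2 u]
        have hWdef : ∀ w:ℝ, (VW α θ γ F s SU (k+1)).2 t w
            = θ * γ t + θ * Gk α θ γ F s (k+1) t (SU t)
              + (VW α θ γ F s SU (k+1)).1 t (max w (SU t)) := fun w => rfl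
        split_ifs with hle
        · have hmax : max u (SU t) = SU t := max_eq_right hle
          rw [hWdef u, hmax]
          exact ⟨heta'.1, heta'.2⟩
        · push_neg at hle
          have hmax : max u (SU t) = u := max_eq_left hle.le
          rw [hWdef u, hmax]
          constructor
          · exact le_trans heta'.1 (le_max_left _ _)
          · apply max_le
            · have hVmono := hWfull.1.1 (SU t) u hle.le
              linarith [heta'.2]
            · have h2 := (hom' u hu).2
              have h3 := mul_nonneg hθ0 hγt
              have h4 := mul_nonneg hθ0 (hGn' (SU t))
              linarith
      exact ⟨hψ, hψb, hom', homb'⟩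
  -- final assembly
  intro t ht2 j mu hmu0 hmurec
  obtain ⟨k, hk⟩ : ∃ k, T - 1 - t = k + 1 := ⟨T - 2 - t, by omega⟩
  have hbt := hbundle (k+1) t (by omega)
  have h1 : omb t ((j:ℝ)*θ) ≤ (VW α θ γ F s SU (k+1)).2 t ((j:ℝ)*θ) :=
    (hbt.2.2.2 _ ⟨j, rfl⟩).2
  have hunroll := VW_unroll (α := α) (θ := θ) (γ := γ) (F := F) (s := s) (SU := SU)
    k t mu hmurec
  rw [hmu0] at hunroll
  rw [hk]
  constructor
  · rw [← hunroll]
    exact h1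
  · have hS : (∑ i ∈ Finset.range (k+1), ∑ n ∈ Finset.Icc 1 (k+1-i),
        α ^ (n+i) * γ (t+i+n) *
          ((∏ m ∈ Finset.range n, F (t+i+m) (SU (t+i) + ((m:ℝ)+1)*θ - s (t+i+m+1)))
           + ∏ m ∈ Finset.range n, F (t+i+m) (max (mu i) (SU (t+i)) + ((m:ℝ)+1)*θ - s (t+i+m+1))))
        ≤ 2 * ∑ i ∈ Finset.range (k+1), ∑ n ∈ Finset.Icc 1 (k+1-i), α ^ (n+i) * γ (t+i+n) := by
      rw [Finset.mul_sum]
      apply Finset.sum_le_sum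
      intro i hi
      rw [Finset.mul_sum]
      apply Finset.sum_le_sum
      intro n hn
      have hi' := Finset.mem_range.1 hi
      have hn' := (Finset.mem_Icc.1 hn).2
      have hγin : 0 ≤ γ (t+i+n) := hγ _ (by omega)
      have hc0 : 0 ≤ α ^ (n+i) * γ (t+i+n) := mul_nonneg (pow_nonneg hα0' _) hγin
      have hP1 : ∏ m ∈ Finset.range n, F (t+i+m) (SU (t+i) + ((m:ℝ)+1)*θ - s (t+i+m+1)) ≤ 1 :=
        Finset.prod_le_one (fun m _ => hF0 _ _) (fun m _ => hF1 _ _)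
      have hP2 : ∏ m ∈ Finset.range n, F (t+i+m)
          (max (mu i) (SU (t+i)) + ((m:ℝ)+1)*θ - s (t+i+m+1)) ≤ 1 :=
        Finset.prod_le_one (fun m _ => hF0 _ _) (fun m _ => hF1 _ _)
      nlinarith
    have h5 := mul_le_mul_of_nonneg_left hS hθ0
    have hring : θ * (2 * ∑ i ∈ Finset.range (k+1), ∑ n ∈ Finset.Icc 1 (k+1-i),
        α ^ (n+i) * γ (t+i+n))
        = 2 * θ * ∑ i ∈ Finset.range (k+1), ∑ n ∈ Finset.Icc 1 (k+1-i),
            α ^ (n+i) * γ (t+i+n) := by ring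
    linarith
end

section
/- Assume T ≥ 3. For every grid point z_k ∈ Z_θ and every t = 0,…,T−3, one has ε̄_t(z_k) ≤ U^ε_t(z_k) ≤ Ū^ε_t(θ). -/
/-!
Write `P_d(τ, y)` (`tailBound`) for the inner sum of `U^ε`, built backwards by
`P_{d+1}(τ, y) = α F_τ(y + θ - s_{τ+1}) (γ_{τ+1} + P_d(τ + 1, y + θ))`.
Backward induction from `T - 1` gives `ψ̄_τ(θ, y) ≤ θ (γ_τ + P_{T-1-τ}(τ, y))` at every grid point `y`:
above `s_{τ+1} - θ`, `ψ̄_τ(θ, y) - γ_τ θ` is `α` times a combination of values `φ̄_{τ+1}(θ, ·)` at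
grid points of `[s_{τ+1}, y + θ]` with weights `f_τ` of total mass at most `F_τ(y + θ - s_{τ+1})`,
and on the grid `φ̄_{τ+1}(θ, ·) = ψ̄_{τ+1}(θ, ·)` above `s_{τ+1}`, because `s_{τ+1}` is the only grid
point of `[s_{τ+1}, s_{τ+1} + θ)`. Since `P` is nondecreasing in `y`, the induction closes. Summing
over `i` gives `ε̄_t ≤ U^ε_t`, and `U^ε_t ≤ Ū^ε_t` because every CDF value is at most `1`.
-/

open MeasureTheory Filter Set

lemma sum_Icc_sub_eq {a b : ℤ} (hab : a ≤ b + 1) (g : ℤ → ℝ) :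
    ∑ j ∈ Finset.Icc a b, (g (j + 1) - g j) = g (b + 1) - g a := by
  induction b, (show a - 1 ≤ b by omega) using Int.leInduction with
  | base => simp
  | succ b hb ih =>
    rw [← Finset.insert_Icc_right_eq_Icc_add_one (by omega),
      Finset.sum_insert (by simp), ih (by omega)]
    ring

lemma eq_of_mem_zmultiples_of_le_of_lt {θ y σ : ℝ} (hy : y ∈ AddSubgroup.zmultiples θ)
    (hσ : σ ∈ AddSubgroup.zmultiples θ) (hσy : σ ≤ y) (hyσ : y - θ < σ) : y = σ := by
  obtain ⟨k, hk⟩ := AddSubgroup.mem_zmultiples_iff.1 (sub_mem hy hσ)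
  rw [zsmul_eq_mul] at hk
  have hθ : 0 < θ := by linarith
  have hk0 : (0 : ℝ) ≤ k := nonneg_of_mul_nonneg_left (by linarith) hθ
  have hk1 : (k : ℝ) < 1 := (mul_lt_iff_lt_one_left hθ).1 (by linarith)
  obtain rfl : k = 0 := by
    have : (0 : ℤ) ≤ k := by exact_mod_cast hk0
    have : k < 1 := by exact_mod_cast hk1
    omega
  rw [Int.cast_zero, zero_mul] at hk
  linarith

lemma max_mem_zmultiples_of_succ_eq {θ : ℝ} {S l : ℕ → ℝ} {N : ℕ}
    (h0 : l 0 ∈ AddSubgroup.zmultiples θ) (hsucc : ∀ i, l (i + 1) = max (l i) (S i) + θ)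
    (hS : ∀ i < N, S i ∈ AddSubgroup.zmultiples θ) :
    ∀ i < N, max (l i) (S i) ∈ AddSubgroup.zmultiples θ := by
  have hmax : ∀ a b, a ∈ AddSubgroup.zmultiples θ → b ∈ AddSubgroup.zmultiples θ →
      max a b ∈ AddSubgroup.zmultiples θ := fun a b ha hb => by
    rcases max_choice a b with h | h <;> rw [h] <;> assumption
  intro i
  induction i with
  | zero => exact fun hN => hmax _ _ h0 (hS 0 hN)
  | succ i ih =>
    intro hN
    rw [hsucc]
    exact hmax _ _ (add_mem (ih (by omega)) (AddSubgroup.mem_zmultiples θ)) (hS _ hN)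

lemma sum_Icc_increments_le {θ : ℝ} {G : ℝ → ℝ} {p : ℤ → ℝ} (hG0 : ∀ x, 0 ≤ G x)
    (hp : ∀ n : ℤ, p n = G ((n + 1) * θ) - G (n * θ)) {k : ℤ} (hk : -1 ≤ k + 1) :
    ∑ j ∈ Finset.Icc (-1) k, p j ≤ G ((k + 1) * θ) := by
  have h := sum_Icc_sub_eq hk (fun j => G (j * θ))
  simp only [Int.cast_add, Int.cast_one] at h
  rw [Finset.sum_congr rfl fun j _ => hp j, h]
  linarith [hG0 (((-1 : ℤ) : ℝ) * θ)]

lemma backward_step_le {θ α c σ : ℝ} {G : ℝ → ℝ} {p : ℤ → ℝ} {ψ φ b : ℝ → ℝ}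
    (hθ : 0 < θ) (hα : 0 ≤ α) (hG0 : ∀ x, 0 ≤ G x) (hGm : Monotone G)
    (hp : ∀ n : ℤ, p n = G ((n + 1) * θ) - G (n * θ)) (hb0 : ∀ y, 0 ≤ b y) (hbm : Monotone b)
    (hψlow : ∀ y, y < σ - θ → ψ y = c)
    (hψhigh : ∀ y, σ - θ ≤ y → ∀ n : ℤ, (n - 1) * θ ≤ y - σ → y - σ < n * θ →
      ψ y = c + α * ∑ j ∈ Finset.Icc (-1 : ℤ) (n - 1), φ (y - j * θ) * p j)
    (hφ : ∀ y ∈ AddSubgroup.zmultiples θ, σ ≤ y → φ y ≤ b y)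
    {y : ℝ} (hy : y ∈ AddSubgroup.zmultiples θ) :
    ψ y ≤ c + α * G (y + θ - σ) * b (y + θ) := by
  by_cases hlow : y < σ - θ
  · rw [hψlow y hlow]
    exact le_add_of_nonneg_right (mul_nonneg (mul_nonneg hα (hG0 _)) (hb0 _))
  push Not at hlow
  obtain ⟨k, ⟨hk₁, hk₂⟩, -⟩ := existsUnique_zsmul_near_of_pos hθ (y - σ)
  simp only [zsmul_eq_mul] at hk₁ hk₂
  push_cast at hk₂
  have hk : -1 ≤ k + 1 := by
    have : (-2 : ℝ) < k := by nlinarith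
    have : (-2 : ℤ) < k := by exact_mod_cast this
    omega
  rw [hψhigh y hlow (k + 1) (by push_cast; linarith) (by push_cast; linarith), add_sub_cancel_right]
  -- every `φ` is evaluated at a grid point of `[σ, y + θ]`, with weights of total mass `≤ G (y + θ - σ)`
  have hterm : ∀ j ∈ Finset.Icc (-1 : ℤ) k, φ (y - j * θ) * p j ≤ b (y + θ) * p j := by
    intro j hj
    have hj' : (-1 : ℝ) ≤ j ∧ (j : ℝ) ≤ k := by
      obtain ⟨h₁, h₂⟩ := Finset.mem_Icc.1 hj
      exact ⟨by exact_mod_cast h₁, by exact_mod_cast h₂⟩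
    have hgrid : y - j * θ ∈ AddSubgroup.zmultiples θ :=
      sub_mem hy (AddSubgroup.intCast_mul_mem_zmultiples θ j)
    have hpj : 0 ≤ p j := by
      rw [hp]
      exact sub_nonneg.2 (hGm (by nlinarith))
    refine mul_le_mul_of_nonneg_right ((hφ _ hgrid (by nlinarith)).trans (hbm (by nlinarith))) hpj
  have hmass : ∑ j ∈ Finset.Icc (-1 : ℤ) k, p j ≤ G (y + θ - σ) :=
    (sum_Icc_increments_le hG0 hp hk).trans (hGm (by linarith))
  calc c + α * ∑ j ∈ Finset.Icc (-1 : ℤ) k, φ (y - j * θ) * p j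
      ≤ c + α * (b (y + θ) * G (y + θ - σ)) := by
        gcongr
        calc _ ≤ ∑ j ∈ Finset.Icc (-1 : ℤ) k, b (y + θ) * p j := Finset.sum_le_sum hterm
          _ ≤ _ := by rw [← Finset.mul_sum]; exact mul_le_mul_of_nonneg_left hmass (hb0 _)
    _ = c + α * G (y + θ - σ) * b (y + θ) := by ring

lemma sum_Icc_one_eq_sum_range (d : ℕ) (g : ℕ → ℝ) :
    ∑ n ∈ Finset.Icc 1 d, g n = ∑ n ∈ Finset.range d, g (n + 1) := by
  rw [← Finset.Ico_add_one_right_eq_Icc, Finset.sum_Ico_eq_sum_range]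
  simp [add_comm]

section TailBound

variable (α θ : ℝ) (γ : ℕ → ℝ) (F : ℕ → ℝ → ℝ) (s : ℕ → ℝ)

noncomputable def tailBound : ℕ → ℕ → ℝ → ℝ
  | 0, _, _ => 0
  | d + 1, τ, y => α * F τ (y + θ - s (τ + 1)) * (γ (τ + 1) + tailBound d (τ + 1) (y + θ))

lemma tailBound_eq_sum (d τ : ℕ) (y : ℝ) :
    tailBound α θ γ F s d τ y = ∑ n ∈ Finset.Icc 1 d, α ^ n * γ (τ + n)
      * ∏ m ∈ Finset.range n, F (τ + m) (y + ((m : ℝ) + 1) * θ - s (τ + m + 1)) := by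
  induction d generalizing τ y with
  | zero => simp [tailBound]
  | succ d ih =>
    rw [tailBound, ih, sum_Icc_one_eq_sum_range, sum_Icc_one_eq_sum_range, Finset.sum_range_succ',
      mul_add, Finset.mul_sum, add_comm]
    congr 1
    · refine Finset.sum_congr rfl fun n _ => ?_
      rw [Finset.prod_range_succ' _ (n + 1)]
      have hshift : ∀ k : ℕ, F (τ + (k + 1)) (y + ((k + 1 : ℕ) + 1) * θ - s (τ + (k + 1) + 1))
          = F (τ + 1 + k) (y + θ + (k + 1) * θ - s (τ + 1 + k + 1)) := fun k => by
        rw [show τ + (k + 1) = τ + 1 + k by omega]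
        push_cast
        ring_nf
      simp only [hshift, show τ + (n + 1 + 1) = τ + 1 + (n + 1) by omega, add_zero, Nat.cast_zero,
        zero_add, one_mul]
      ring
    · simp only [zero_add, pow_one, Finset.prod_range_one, Nat.cast_zero]
      ring_nf

lemma pow_mul_tailBound_eq_sum (i d τ : ℕ) (y : ℝ) :
    α ^ i * tailBound α θ γ F s d τ y = ∑ n ∈ Finset.Icc 1 d, α ^ (n + i) * γ (τ + n)
      * ∏ m ∈ Finset.range n, F (τ + m) (y + ((m : ℝ) + 1) * θ - s (τ + m + 1)) := by
  rw [tailBound_eq_sum, Finset.mul_sum]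
  exact Finset.sum_congr rfl fun n _ => by ring

variable {α θ γ F s}

lemma tailBound_nonneg {T : ℕ} (hα : 0 ≤ α) (hF0 : ∀ t x, 0 ≤ F t x) (hγ : ∀ t < T, 0 ≤ γ t)
    {d τ : ℕ} (hd : τ + d < T) (y : ℝ) : 0 ≤ tailBound α θ γ F s d τ y := by
  induction d generalizing τ y with
  | zero => simp [tailBound]
  | succ d ih =>
    exact mul_nonneg (mul_nonneg hα (hF0 _ _)) (add_nonneg (hγ _ (by omega)) (ih (by omega) _))

lemma tailBound_mono {T : ℕ} (hα : 0 ≤ α) (hF0 : ∀ t x, 0 ≤ F t x) (hFm : ∀ t, Monotone (F t))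
    (hγ : ∀ t < T, 0 ≤ γ t) {d τ : ℕ} (hd : τ + d < T) : Monotone (tailBound α θ γ F s d τ) := by
  induction d generalizing τ with
  | zero => simp [tailBound, monotone_const]
  | succ d ih =>
    intro y z hyz
    have hγ' := hγ (τ + 1) (by omega)
    have hnn := tailBound_nonneg (θ := θ) (s := s) hα hF0 hγ (d := d) (τ := τ + 1) (by omega)
    dsimp only [tailBound]
    exact mul_le_mul (mul_le_mul_of_nonneg_left (hFm τ (by linarith)) hα)
      (add_le_add_right (ih (by omega) (by linarith)) _) (add_nonneg hγ' (hnn _))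
      (mul_nonneg hα (hF0 _ _))

end TailBound

lemma phib_eq_psib_of_mem_zmultiples {T : ℕ} {θ : ℝ} {γ s : ℕ → ℝ}
    {psib phib : ℕ → ℝ → ℝ → ℝ} (hs : ∀ τ, τ + 2 ≤ T → s τ ∈ AddSubgroup.zmultiples θ)
    (hpsibT1 : ∀ x y : ℝ, psib (T - 1) x y = γ (T - 1) * x)
    (hphibT1 : ∀ x y : ℝ, phib (T - 1) x y = if y < s (T - 1) then 0 else γ (T - 1) * x)
    (hphib : ∀ t, t + 2 ≤ T → ∀ x y : ℝ, phib t x y =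
      if y < s t then 0 else if y - x < s t then psib t (y - s t + θ) y else psib t x y)
    {τ : ℕ} (hτ : τ < T) {y : ℝ} (hy : y ∈ AddSubgroup.zmultiples θ) (hsy : s τ ≤ y) :
    phib τ θ y = psib τ θ y := by
  rcases (show τ = T - 1 ∨ τ + 2 ≤ T by omega) with rfl | hτ2
  · rw [hphibT1, if_neg (not_lt.2 hsy), hpsibT1]
  · rw [hphib τ hτ2, if_neg (not_lt.2 hsy)]
    split_ifs with hlt
    · rw [eq_of_mem_zmultiples_of_le_of_lt hy (hs τ hτ2) hsy hlt, sub_self, zero_add]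
    · rfl

theorem psib_le_tailBound {T : ℕ} {α θ : ℝ} {γ s : ℕ → ℝ} {F : ℕ → ℝ → ℝ} {f : ℕ → ℤ → ℝ}
    {psib phib : ℕ → ℝ → ℝ → ℝ} (hα : 0 ≤ α) (hθ : 0 < θ) (hF0 : ∀ t x, 0 ≤ F t x)
    (hFm : ∀ t, Monotone (F t)) (hf : ∀ t (n : ℤ), f t n = F t ((n + 1) * θ) - F t (n * θ))
    (hγ : ∀ t < T, 0 ≤ γ t) (hs : ∀ τ, τ + 2 ≤ T → s τ ∈ AddSubgroup.zmultiples θ)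
    (hpsibT1 : ∀ x y : ℝ, psib (T - 1) x y = γ (T - 1) * x)
    (hphibT1 : ∀ x y : ℝ, phib (T - 1) x y = if y < s (T - 1) then 0 else γ (T - 1) * x)
    (hpsibA : ∀ t, t + 2 ≤ T → ∀ x y : ℝ, y < s (t + 1) - θ → psib t x y = γ t * x)
    (hpsibB : ∀ t, t + 2 ≤ T → ∀ x y : ℝ, s (t + 1) - θ ≤ y → ∀ n : ℤ,
      ((n : ℝ) - 1) * θ ≤ y - s (t + 1) → y - s (t + 1) < (n : ℝ) * θ →
      psib t x y = γ t * x
        + α * ∑ j ∈ Finset.Icc (-1 : ℤ) (n - 1), phib (t + 1) x (y - (j : ℝ) * θ) * f t j)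
    (hphib : ∀ t, t + 2 ≤ T → ∀ x y : ℝ, phib t x y =
      if y < s t then 0 else if y - x < s t then psib t (y - s t + θ) y else psib t x y)
    {d τ : ℕ} (hdτ : τ + d + 1 = T) {y : ℝ} (hy : y ∈ AddSubgroup.zmultiples θ) :
    psib τ θ y ≤ θ * (γ τ + tailBound α θ γ F s d τ y) := by
  induction d generalizing τ y with
  | zero =>
    obtain rfl : τ = T - 1 := by omega
    simp [hpsibT1, tailBound, mul_comm]
  | succ d ih =>
    have hτ2 : τ + 2 ≤ T := by omega
    have hb0 : ∀ z, 0 ≤ θ * (γ (τ + 1) + tailBound α θ γ F s d (τ + 1) z) := fun z =>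
      mul_nonneg hθ.le (add_nonneg (hγ _ (by omega)) (tailBound_nonneg hα hF0 hγ (by omega) z))
    have hbm : Monotone fun z => θ * (γ (τ + 1) + tailBound α θ γ F s d (τ + 1) z) :=
      fun a b hab => mul_le_mul_of_nonneg_left
        (add_le_add_right (tailBound_mono hα hF0 hFm hγ (by omega) hab) _) hθ.le
    calc psib τ θ y
        ≤ γ τ * θ + α * F τ (y + θ - s (τ + 1))
            * (θ * (γ (τ + 1) + tailBound α θ γ F s d (τ + 1) (y + θ))) :=
          backward_step_le (φ := phib (τ + 1) θ) hθ hα (hF0 τ) (hFm τ) (hf τ) hb0 hbm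
            (fun z hz => hpsibA τ hτ2 θ z hz) (hpsibB τ hτ2 θ)
            (fun z hz hsz => (phib_eq_psib_of_mem_zmultiples hs hpsibT1 hphibT1 hphib
              (by omega) hz hsz).trans_le (ih (by omega) hz)) hy
      _ = θ * (γ τ + tailBound α θ γ F s (d + 1) τ y) := by
        rw [tailBound]
        ring

lemma sum_mul_prod_le_sum {ι κ : Type*} (s : Finset ι) (t : ι → Finset κ) {a : ι → ℝ}
    {g : ι → κ → ℝ} (ha : ∀ i ∈ s, 0 ≤ a i) (hg0 : ∀ i m, 0 ≤ g i m) (hg1 : ∀ i m, g i m ≤ 1) :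
    ∑ i ∈ s, a i * ∏ m ∈ t i, g i m ≤ ∑ i ∈ s, a i :=
  Finset.sum_le_sum fun i hi =>
    mul_le_of_le_one_right (ha i hi) (Finset.prod_le_one (fun m _ => hg0 i m) fun m _ => hg1 i m)

theorem stmt19_general
    (T : ℕ)
    (α : ℝ) (hα0 : 0 < α)
    (K : ℕ → ℝ) (hK0 : ∀ t, t < T → 0 ≤ K t)
    (ν : ℕ → MeasureTheory.Measure ℝ)
    (hprob : ∀ t, MeasureTheory.IsProbabilityMeasure (ν t))
    (F : ℕ → ℝ → ℝ) (hF : ∀ t x, F t x = (ν t (Set.Iic x)).toReal)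
    (θ : ℝ) (hθ : 0 < θ)
    (f : ℕ → ℤ → ℝ)
    (hf : ∀ t (n : ℤ), f t n = F t (((n : ℝ) + 1) * θ) - F t ((n : ℝ) * θ))
    (SU : ℕ → ℝ)
    (s S : ℕ → ℝ) (I Ibar : ℕ → ℝ)
    (H : ℕ → ℝ → ℝ)
    (hSdef : ∀ t, t + 2 ≤ T →
      IsGreatest {w | (∃ m : ℤ, w = (m : ℝ) * θ) ∧ I t ≤ w ∧ w ≤ SU t ∧
        ∀ u, (∃ n : ℤ, u = (n : ℝ) * θ) → I t ≤ u → u ≤ SU t → H t w ≤ H t u} (S t))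
    (hsdef0 : ∀ t, t + 2 ≤ T → K t = 0 → s t = S t)
    (hsdef1 : ∀ t, t + 2 ≤ T → 0 < K t →
      IsLeast {w | (∃ m : ℤ, w = (m : ℝ) * θ) ∧ Ibar t ≤ w ∧ w ≤ S t ∧ H t w ≤ H t (S t) + K t} (s t))
    (γ : ℕ → ℝ) (hγ : ∀ t, t < T → 0 ≤ γ t)
    (psib phib : ℕ → ℝ → ℝ → ℝ)
    (hpsibT1 : ∀ x y : ℝ, psib (T - 1) x y = γ (T - 1) * x)
    (hphibT1 : ∀ x y : ℝ, phib (T - 1) x y = if y < s (T - 1) then 0 else γ (T - 1) * x)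
    (hpsibA : ∀ t, t + 2 ≤ T → ∀ x y : ℝ, y < s (t + 1) - θ → psib t x y = γ t * x)
    (hpsibB : ∀ t, t + 2 ≤ T → ∀ x y : ℝ, s (t + 1) - θ ≤ y → ∀ n : ℤ,
      ((n : ℝ) - 1) * θ ≤ y - s (t + 1) → y - s (t + 1) < (n : ℝ) * θ →
      psib t x y = γ t * x
        + α * ∑ j ∈ Finset.Icc (-1 : ℤ) (n - 1), phib (t + 1) x (y - (j : ℝ) * θ) * f t j)
    (hphib : ∀ t, t + 2 ≤ T → ∀ x y : ℝ, phib t x y =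
      if y < s t then 0 else if y - x < s t then psib t (y - s t + θ) y else psib t x y)
    (lam : ℕ → ℤ → ℕ → ℝ)
    (hlam0 : ∀ t k, lam t k 0 = (k : ℝ) * θ)
    (hlamS : ∀ t k i, lam t k (i + 1) = max (lam t k i) (S (t + i)) + θ)
    (epsb : ℕ → ℤ → ℝ)
    (hepsbRec : ∀ t k, t + 3 ≤ T → epsb t k =
      α ^ (T - 1 - t) * γ (T - 1) * θ
        + ∑ i ∈ Finset.range (T - 2 - t),
            2 * α ^ i * (psib (t + i) θ (max (lam t k i) (S (t + i))) - γ (t + i) * θ))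
    :
    ∀ t, t + 3 ≤ T → ∀ k : ℤ,
      (epsb t k ≤
        α ^ (T - 1 - t) * γ (T - 1) * θ
          + 2 * θ * ∑ i ∈ Finset.range (T - 2 - t), ∑ n ∈ Finset.Icc 1 (T - 1 - t - i),
              α ^ (n + i) * γ (t + i + n)
                * ∏ m ∈ Finset.range n,
                    F (t + i + m) (max (lam t k i) (S (t + i)) + ((m : ℝ) + 1) * θ - s (t + i + m + 1)))
      ∧ (α ^ (T - 1 - t) * γ (T - 1) * θ
          + 2 * θ * ∑ i ∈ Finset.range (T - 2 - t), ∑ n ∈ Finset.Icc 1 (T - 1 - t - i),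
              α ^ (n + i) * γ (t + i + n)
                * ∏ m ∈ Finset.range n,
                    F (t + i + m) (max (lam t k i) (S (t + i)) + ((m : ℝ) + 1) * θ - s (t + i + m + 1)))
        ≤ α ^ (T - 1 - t) * γ (T - 1) * θ
          + 2 * θ * ∑ i ∈ Finset.range (T - 2 - t), ∑ n ∈ Finset.Icc 1 (T - 1 - t - i),
              α ^ (n + i) * γ (t + i + n) := by
  have hcdf : ∀ t, F t = ProbabilityTheory.cdf (ν t) := fun t => funext fun x => by
    rw [hF, ProbabilityTheory.cdf_eq_real, measureReal_def]
  have hF0 : ∀ t x, 0 ≤ F t x := fun t x => hcdf t ▸ ProbabilityTheory.cdf_nonneg _ x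
  have hFm : ∀ t, Monotone (F t) := fun t => hcdf t ▸ ProbabilityTheory.monotone_cdf _
  have hS : ∀ τ, τ + 2 ≤ T → S τ ∈ AddSubgroup.zmultiples θ := fun τ hτ => by
    obtain ⟨m, hm⟩ := (hSdef τ hτ).1.1
    exact hm ▸ AddSubgroup.intCast_mul_mem_zmultiples θ m
  have hs : ∀ τ, τ + 2 ≤ T → s τ ∈ AddSubgroup.zmultiples θ := fun τ hτ => by
    rcases (hK0 τ (by omega)).eq_or_lt with hK | hK
    · exact hsdef0 τ hτ hK.symm ▸ hS τ hτ
    · obtain ⟨m, hm⟩ := (hsdef1 τ hτ hK).1.1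
      exact hm ▸ AddSubgroup.intCast_mul_mem_zmultiples θ m
  intro t ht k
  have hmax := max_mem_zmultiples_of_succ_eq (S := fun i => S (t + i)) (N := T - 1 - t)
    (hlam0 t k ▸ AddSubgroup.intCast_mul_mem_zmultiples θ k) (hlamS t k) (fun i hi => hS _ (by omega))
  refine ⟨?_, ?_⟩
  · rw [hepsbRec t k ht, Finset.mul_sum]
    refine add_le_add le_rfl (Finset.sum_le_sum fun i hi => ?_)
    have hi' : t + i + 3 ≤ T := by have := Finset.mem_range.1 hi; omega
    have hψ := psib_le_tailBound (d := T - 1 - t - i) (τ := t + i) hα0.le hθ hF0 hFm hf hγ hs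
      hpsibT1 hphibT1 hpsibA hpsibB hphib (by omega) (hmax i (by omega))
    rw [← pow_mul_tailBound_eq_sum]
    nlinarith [pow_nonneg hα0.le i]
  · refine add_le_add le_rfl (mul_le_mul_of_nonneg_left (Finset.sum_le_sum fun i hi =>
      sum_mul_prod_le_sum _ _ (fun n hn => ?_) (fun _ _ => hF0 _ _)
        (fun _ _ => hcdf _ ▸ ProbabilityTheory.cdf_le_one _ _)) (by positivity))
    have := Finset.mem_range.1 hi
    have := Finset.mem_Icc.1 hn
    exact mul_nonneg (pow_nonneg hα0.le _) (hγ _ (by omega))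

theorem stmt19
    (T : ℕ) (hT : 2 ≤ T) (hT3 : 3 ≤ T)
    (α : ℝ) (hα0 : 0 < α) (hα1 : α ≤ 1)
    (K : ℕ → ℝ) (hK0 : ∀ t, t < T → 0 ≤ K t)
    (hKmono : ∀ t, t + 2 ≤ T → α * K (t + 1) ≤ K t)
    (ν : ℕ → MeasureTheory.Measure ℝ)
    (hprob : ∀ t, MeasureTheory.IsProbabilityMeasure (ν t))
    (hpos : ∀ t, ν t (Set.Iio 0) = 0)
    (F : ℕ → ℝ → ℝ) (hF : ∀ t x, F t x = (ν t (Set.Iic x)).toReal)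
    (C : ℕ → ℝ → ℝ)
    (hCconv : ∀ t, t < T → ConvexOn ℝ Set.univ (C t))
    (hCcoer : ∀ t, t < T → Filter.Tendsto (C t) (Filter.cocompact ℝ) Filter.atTop)
    (θ : ℝ) (hθ : 0 < θ)
    (f : ℕ → ℤ → ℝ)
    (hf : ∀ t (n : ℤ), f t n = F t (((n : ℝ) + 1) * θ) - F t ((n : ℝ) * θ))
    (Cm SU : ℕ → ℝ)
    (hCm : ∀ t, t < T → IsLeast {x | ∀ y, C t x ≤ C t y} (Cm t))
    (hSU : ∀ t, t < T → ∀ n0 : ℤ, (n0 : ℝ) * θ < Cm t → Cm t ≤ ((n0 : ℝ) + 1) * θ →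
      IsLeast {w | (∃ m : ℤ, w = (m : ℝ) * θ) ∧ Cm t ≤ w ∧ C t ((n0 : ℝ) * θ) + K t < C t w} (SU t))
    (s S : ℕ → ℝ) (I Ibar : ℕ → ℝ)
    (hsT1a : s (T - 1) ≤ Cm (T - 1))
    (hsT1b : C (T - 1) (s (T - 1)) = C (T - 1) (Cm (T - 1)) + K (T - 1))
    (hIbarT1 : Ibar (T - 1) = s (T - 1))
    (hI : ∀ t, t + 2 ≤ T →
      IsGreatest {w | (∃ m : ℤ, w = (m : ℝ) * θ) ∧ w < min (Ibar (t + 1) - θ) (Cm t)} (I t))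
    (hIbar : ∀ t, t + 2 ≤ T →
      IsGreatest {w | (∃ m : ℤ, w = (m : ℝ) * θ) ∧ w ≤ I t ∧ C t (I t) + K t < C t w} (Ibar t - θ))
    (H V : ℕ → ℝ → ℝ)
    (hHT1 : ∀ y, H (T - 1) y = C (T - 1) y)
    (hST1 : S (T - 1) = Cm (T - 1))
    (hV : ∀ t, t < T → ∀ y, V t y = if y < s t then H t (S t) + K t else H t y)
    (hHrec : ∀ t, t + 2 ≤ T → ∀ y,
      H t y = C t y + α * ∑' n : ℕ, V (t + 1) (y - ((n : ℝ) - 1) * θ) * f t ((n : ℤ) - 1))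
    (hSdef : ∀ t, t + 2 ≤ T →
      IsGreatest {w | (∃ m : ℤ, w = (m : ℝ) * θ) ∧ I t ≤ w ∧ w ≤ SU t ∧
        ∀ u, (∃ n : ℤ, u = (n : ℝ) * θ) → I t ≤ u → u ≤ SU t → H t w ≤ H t u} (S t))
    (hsdef0 : ∀ t, t + 2 ≤ T → K t = 0 → s t = S t)
    (hsdef1 : ∀ t, t + 2 ≤ T → 0 < K t →
      IsLeast {w | (∃ m : ℤ, w = (m : ℝ) * θ) ∧ Ibar t ≤ w ∧ w ≤ S t ∧ H t w ≤ H t (S t) + K t} (s t))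
    (γ : ℕ → ℝ) (hγ : ∀ t, t < T → 0 ≤ γ t)
    (hLip : ∀ t, t < T → ∀ x y, |C t x - C t y| ≤ γ t * |x - y|)
    (psib phib : ℕ → ℝ → ℝ → ℝ)
    (hpsibT1 : ∀ x y : ℝ, psib (T - 1) x y = γ (T - 1) * x)
    (hphibT1 : ∀ x y : ℝ, phib (T - 1) x y = if y < s (T - 1) then 0 else γ (T - 1) * x)
    (hpsibA : ∀ t, t + 2 ≤ T → ∀ x y : ℝ, y < s (t + 1) - θ → psib t x y = γ t * x)
    (hpsibB : ∀ t, t + 2 ≤ T → ∀ x y : ℝ, s (t + 1) - θ ≤ y → ∀ n : ℤ,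
      ((n : ℝ) - 1) * θ ≤ y - s (t + 1) → y - s (t + 1) < (n : ℝ) * θ →
      psib t x y = γ t * x
        + α * ∑ j ∈ Finset.Icc (-1 : ℤ) (n - 1), phib (t + 1) x (y - (j : ℝ) * θ) * f t j)
    (hphib : ∀ t, t + 2 ≤ T → ∀ x y : ℝ, phib t x y =
      if y < s t then 0 else if y - x < s t then psib t (y - s t + θ) y else psib t x y)
    (lam : ℕ → ℤ → ℕ → ℝ)
    (hlam0 : ∀ t k, lam t k 0 = (k : ℝ) * θ)
    (hlamS : ∀ t k i, lam t k (i + 1) = max (lam t k i) (S (t + i)) + θ)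
    (epsb : ℕ → ℤ → ℝ)
    (hepsbT2 : ∀ k, epsb (T - 2) k = α * γ (T - 1) * θ)
    (hepsbRec : ∀ t k, t + 3 ≤ T → epsb t k =
      α ^ (T - 1 - t) * γ (T - 1) * θ
        + ∑ i ∈ Finset.range (T - 2 - t),
            2 * α ^ i * (psib (t + i) θ (max (lam t k i) (S (t + i))) - γ (t + i) * θ))
    :
    ∀ t, t + 3 ≤ T → ∀ k : ℤ,
      (epsb t k ≤
        α ^ (T - 1 - t) * γ (T - 1) * θ
          + 2 * θ * ∑ i ∈ Finset.range (T - 2 - t), ∑ n ∈ Finset.Icc 1 (T - 1 - t - i),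
              α ^ (n + i) * γ (t + i + n)
                * ∏ m ∈ Finset.range n,
                    F (t + i + m) (max (lam t k i) (S (t + i)) + ((m : ℝ) + 1) * θ - s (t + i + m + 1)))
      ∧ (α ^ (T - 1 - t) * γ (T - 1) * θ
          + 2 * θ * ∑ i ∈ Finset.range (T - 2 - t), ∑ n ∈ Finset.Icc 1 (T - 1 - t - i),
              α ^ (n + i) * γ (t + i + n)
                * ∏ m ∈ Finset.range n,
                    F (t + i + m) (max (lam t k i) (S (t + i)) + ((m : ℝ) + 1) * θ - s (t + i + m + 1)))
        ≤ α ^ (T - 1 - t) * γ (T - 1) * θ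
          + 2 * θ * ∑ i ∈ Finset.range (T - 2 - t), ∑ n ∈ Finset.Icc 1 (T - 1 - t - i),
              α ^ (n + i) * γ (t + i + n) :=
  stmt19_general T α hα0 K hK0 ν hprob F hF θ hθ f hf SU s S I Ibar H hSdef hsdef0 hsdef1 γ hγ psib
    phib hpsibT1 hphibT1 hpsibA hpsibB hphib lam hlam0 hlamS epsb hepsbRec
end
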